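/- Any path extension of a family B is well-graded: if B' is the collection of all sets occurring on a path family (tight paths π_{K,L} from K to K ∪ L in the power set of ∪B, for all K, L ∈ B), then the span of B' is well-graded. -/

import Mathlib

/-!
`Span B'` is union-closed, and a family `F` is well-graded as soon as for all `P, Q ∈ F` with
`Q ⊄ P` some `x ∈ Q \ P` has `insert x P ∈ F`: induction on `|P ∆ Q|` builds the tight path.
Such an `x` is found where a path `π K L` first leaves `P`: the first member `d ⊄ P` differs from
its predecessor `c ⊆ P` in one point `x`, so `P ∪ d = insert x P`. Every member `S` of a tight path
from `a` to `b` satisfies `a ∩ b ⊆ S ⊆ a ∪ b`, so along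
`π K L` each member is contained in all later ones.
If `x₀ ∈ A ⊆ Q` with `x₀ ∉ P` and `A ∈ π K L`, use `π K L` when `K ⊆ P` (then `x ∈ A ⊆ Q`), and
otherwise `π K' K` for some `K' ⊆ P` (then `x ∈ K ⊆ A`).
-/

open Finset

variable {α : Type*} [DecidableEq α]

/-- The span of a family `G`: all unions of nonempty subfamilies of `G`. -/
def Span (G : Finset (Finset α)) : Finset (Finset α) :=
  (G.powerset.filter Finset.Nonempty).image fun H => H.sup id

/-- A family is ∪-closed if it contains the union of each of its nonempty subfamilies. -/
def UnionClosed (F : Finset (Finset α)) : Prop :=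
  ∀ H ⊆ F, H.Nonempty → H.sup id ∈ F

/-- `p` is a tight path from `P` to `Q` inside the family `F`. -/
def IsTightPath (F : Finset (Finset α)) (P Q : Finset α) (p : List (Finset α)) : Prop :=
  p.head? = some P ∧ p.getLast? = some Q ∧
  p.length = (symmDiff P Q).card + 1 ∧
  (∀ S ∈ p, S ∈ F) ∧
  List.Chain' (fun A B => (symmDiff A B).card = 1) p

/-- A family is well-graded if any two distinct members are joined by a tight path. -/
def WellGraded (F : Finset (Finset α)) : Prop :=
  ∀ P ∈ F, ∀ Q ∈ F, P ≠ Q → ∃ p, IsTightPath F P Q p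

/-- `B` is a base of `F`: a minimal subfamily of `F` spanning `F`. -/
def IsBase (B F : Finset (Finset α)) : Prop :=
  B ⊆ F ∧ Span B = F ∧ ∀ H ⊆ B, Span H = F → H = B

/-- `A` is an atom of `F` at `x`: an inclusion-minimal member of `F` containing `x`. -/
def IsAtomAt (F : Finset (Finset α)) (x : α) (A : Finset α) : Prop :=
  A ∈ F ∧ x ∈ A ∧ ∀ B ∈ F, x ∈ B → B ⊆ A → B = A

/-- `A` is an atom of `F`: either the empty set (if it is in `F`) or an atom at some point. -/
def IsAtomOf (F : Finset (Finset α)) (A : Finset α) : Prop :=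
  (A = ∅ ∧ A ∈ F) ∨ ∃ x, IsAtomAt F x A

/-- The surmise function: the collection of atoms of `F` at `x`. -/
def surmise (F : Finset (Finset α)) (x : α) : Finset (Finset α) :=
  F.filter fun A => x ∈ A ∧ ∀ B ∈ F, x ∈ B → B ⊆ A → B = A

/-- `{σ(x) : x ∈ ∪F}` forms a partition of `B \ {∅}`. -/
def SurmisePartition (F B : Finset (Finset α)) : Prop :=
  (∀ x ∈ F.sup id, ∀ y ∈ F.sup id,
      surmise F x = surmise F y ∨ Disjoint (surmise F x) (surmise F y)) ∧
  (F.sup id).sup (surmise F) = B.erase ∅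

/-- The endpoints of `X` in the family `B`: elements of `X` lying in no proper
subset of `X` belonging to `B`. -/
def endpoints (B : Finset (Finset α)) (X : Finset α) : Finset α :=
  X \ (B.filter fun Y => Y ⊂ X).sup id

/-- A family is discriminative if points contained in the same members are equal. -/
def Discriminative (F : Finset (Finset α)) : Prop :=
  ∀ u ∈ F.sup id, ∀ v ∈ F.sup id, (∀ S ∈ F, (u ∈ S ↔ v ∈ S)) → u = v

section HammingMetric

theorem card_symmDiff_le_add (a b c : Finset α) :
    #(symmDiff a c) ≤ #(symmDiff a b) + #(symmDiff b c) :=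
  (card_le_card (symmDiff_triangle a b c)).trans (card_union_le _ _)

theorem inter_subset_and_subset_union_of_card_symmDiff_add_eq {a b c : Finset α}
    (h : #(symmDiff a b) + #(symmDiff b c) = #(symmDiff a c)) : a ∩ c ⊆ b ∧ b ⊆ a ∪ c := by
  have hdisj : Disjoint (symmDiff a b) (symmDiff b c) := by
    have := card_union_add_card_inter (symmDiff a b) (symmDiff b c)
    have := card_le_card (symmDiff_triangle a b c)
    rw [disjoint_iff_inter_eq_empty, ← card_eq_zero]
    simp only [sup_eq_union] at this
    omega
  constructor
  · intro y hy
    by_contra hyb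
    rw [mem_inter] at hy
    exact disjoint_left.mp hdisj (mem_symmDiff.mpr (Or.inl ⟨hy.1, hyb⟩))
      (mem_symmDiff.mpr (Or.inr ⟨hy.2, hyb⟩))
  · intro y hyb
    by_contra hy
    rw [mem_union, not_or] at hy
    exact disjoint_left.mp hdisj (mem_symmDiff.mpr (Or.inr ⟨hyb, hy.1⟩))
      (mem_symmDiff.mpr (Or.inl ⟨hyb, hy.2⟩))

theorem card_symmDiff_insert_self {x : α} {P : Finset α} (hxP : x ∉ P) :
    #(symmDiff P (insert x P)) = 1 := by
  rw [symmDiff_of_le (subset_insert x P), insert_sdiff_cancel hxP, card_singleton]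

theorem card_symmDiff_insert_add_one {x : α} {P Q : Finset α} (hxQ : x ∈ Q) (hxP : x ∉ P) :
    #(symmDiff (insert x P) Q) + 1 = #(symmDiff P Q) := by
  have : symmDiff (insert x P) Q = (symmDiff P Q).erase x := by
    ext y
    by_cases hy : y = x
    · subst hy; simp [mem_symmDiff, hxQ]
    · simp [mem_symmDiff, hy]
  rw [this, card_erase_add_one (mem_symmDiff.mpr (Or.inr ⟨hxQ, hxP⟩))]

theorem union_eq_insert_of_card_symmDiff_eq_one {a d P : Finset α} {y : α} (haP : a ⊆ P)
    (had : #(symmDiff a d) = 1) (hyd : y ∈ d) (hyP : y ∉ P) : P ∪ d = insert y P := by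
  have hsingle : ∀ z ∈ d, z ∉ P → z ∈ symmDiff a d := fun z hzd hzP =>
    mem_symmDiff.mpr (Or.inr ⟨hzd, fun hza => hzP (haP hza)⟩)
  ext z
  simp only [mem_union, mem_insert]
  refine ⟨fun hz => ?_, fun hz => hz.elim (fun h => Or.inr (h ▸ hyd)) Or.inl⟩
  by_cases hzP : z ∈ P
  · exact Or.inr hzP
  · exact Or.inl (card_le_one.mp had.le _ (hsingle z (hz.resolve_left hzP) hzP) _
      (hsingle y hyd hyP))

end HammingMetric

section TightPath

variable {F : Finset (Finset α)} {a b : Finset α} {p : List (Finset α)}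

theorem card_symmDiff_lt_length_of_isChain : ∀ {p : List (Finset α)} {a b : Finset α},
    p.IsChain (fun A B => #(symmDiff A B) = 1) → p.head? = some a → p.getLast? = some b →
    #(symmDiff a b) < p.length
  | [], _, _, _, ha, _ => by simp at ha
  | [c], a, b, _, ha, hb => by simp_all
  | c :: d :: t, a, b, hch, ha, hb => by
    rw [List.isChain_cons_cons] at hch
    obtain rfl := Option.some_inj.mp ha
    rw [List.getLast?_cons_cons] at hb
    have := card_symmDiff_lt_length_of_isChain hch.2 rfl hb
    have := card_symmDiff_le_add c d b
    simp only [List.length_cons] at *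
    omega

theorem IsTightPath.singleton {P : Finset α} (hP : P ∈ F) : IsTightPath F P P [P] :=
  ⟨rfl, rfl, by simp, by simpa using hP, .singleton P⟩

theorem IsTightPath.of_cons_cons {d : Finset α} {t : List (Finset α)}
    (h : IsTightPath F a b (a :: d :: t)) :
    #(symmDiff a d) = 1 ∧ #(symmDiff d b) + 1 = #(symmDiff a b) ∧ IsTightPath F d b (d :: t) := by
  obtain ⟨-, hb, hlen, hmem, hch⟩ := h
  replace hch := List.isChain_cons_cons.mp hch
  rw [List.getLast?_cons_cons] at hb
  have hlt := card_symmDiff_lt_length_of_isChain hch.2 rfl hb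
  have htri := card_symmDiff_le_add a d b
  simp only [List.length_cons] at hlen hlt
  have hcard : #(symmDiff d b) + 1 = #(symmDiff a b) := by omega
  refine ⟨hch.1, hcard, rfl, hb, by simp only [List.length_cons]; omega,
    fun S hS => hmem S (List.mem_cons_of_mem _ hS), hch.2⟩

theorem IsTightPath.inter_subset_and_subset_union {S : Finset α} (h : IsTightPath F a b p)
    (hS : S ∈ p) : a ∩ b ⊆ S ∧ S ⊆ a ∪ b := by
  induction p generalizing a with
  | nil => simp at hS
  | cons c t ih =>
    obtain rfl : c = a := Option.some_inj.mp h.1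
    obtain rfl | hSt := List.mem_cons.mp hS
    · exact ⟨inter_subset_left, subset_union_left⟩
    cases t with
    | nil => simp at hSt
    | cons d t =>
      obtain ⟨hcd, hdb, hd⟩ := h.of_cons_cons
      obtain ⟨hcbd, hdcb⟩ :=
        inter_subset_and_subset_union_of_card_symmDiff_add_eq (a := c) (b := d) (c := b) (by omega)
      obtain ⟨hdbS, hSdb⟩ := ih hd hSt
      exact ⟨subset_inter hcbd inter_subset_right |>.trans hdbS,
        hSdb.trans (union_subset hdcb subset_union_right)⟩

theorem IsTightPath.subset_and_subset_of_subset {S : Finset α} (h : IsTightPath F a b p)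
    (hab : a ⊆ b) (hS : S ∈ p) : a ⊆ S ∧ S ⊆ b := by
  simpa only [inter_eq_left.mpr hab, union_eq_right.mpr hab] using
    h.inter_subset_and_subset_union hS

theorem IsTightPath.reverse (h : IsTightPath F a b p) : IsTightPath F b a p.reverse := by
  obtain ⟨ha, hb, hlen, hmem, hch⟩ := h
  refine ⟨by rwa [List.head?_reverse], by rwa [List.getLast?_reverse], ?_,
    fun S hS => hmem S (List.mem_reverse.mp hS), ?_⟩
  · rw [List.length_reverse, hlen, symmDiff_comm]
  · exact List.isChain_reverse.mpr (hch.imp fun A B h => by rwa [symmDiff_comm])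

theorem IsTightPath.cons_of_insert {x : α} (h : IsTightPath F (insert x a) b p) (ha : a ∈ F)
    (hxb : x ∈ b) (hxa : x ∉ a) : IsTightPath F a b (a :: p) := by
  obtain ⟨hhead, hlast, hlen, hmem, hch⟩ := h
  obtain ⟨t, rfl⟩ : ∃ t, p = insert x a :: t := ⟨p.tail, List.eq_cons_of_mem_head? hhead⟩
  have := card_symmDiff_insert_add_one hxb hxa
  refine ⟨rfl, by rwa [List.getLast?_cons_cons], by simp only [List.length_cons] at hlen ⊢; omega,
    List.forall_mem_cons.mpr ⟨ha, hmem⟩, ?_⟩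
  exact List.IsChain.cons_cons (card_symmDiff_insert_self hxa) hch

theorem exists_isTightPath_of_exists_insert
    (hF : ∀ P ∈ F, ∀ Q ∈ F, ¬ Q ⊆ P → ∃ x ∈ Q, x ∉ P ∧ insert x P ∈ F) :
    ∀ P ∈ F, ∀ Q ∈ F, ∃ p, IsTightPath F P Q p := by
  intro P hP Q hQ
  induction hn : #(symmDiff P Q) using Nat.strong_induction_on generalizing P Q with
  | _ n ih =>
  by_cases hQP : Q ⊆ P
  · by_cases hPQ : P ⊆ Q
    · obtain rfl := hPQ.antisymm hQP
      exact ⟨[P], .singleton hP⟩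
    · obtain ⟨x, hxP, hxQ, hR⟩ := hF Q hQ P hP hPQ
      have := card_symmDiff_insert_add_one hxP hxQ
      obtain ⟨p, hp⟩ := ih _ (by rw [← hn, symmDiff_comm P Q]; omega) (insert x Q) hR P hP rfl
      exact ⟨_, (hp.cons_of_insert hQ hxP hxQ).reverse⟩
  · obtain ⟨x, hxQ, hxP, hR⟩ := hF P hP Q hQ hQP
    have := card_symmDiff_insert_add_one hxQ hxP
    obtain ⟨p, hp⟩ := ih _ (by omega) (insert x P) hR Q hQ rfl
    exact ⟨_, hp.cons_of_insert hP hxQ hxP⟩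

theorem WellGraded.of_exists_insert
    (hF : ∀ P ∈ F, ∀ Q ∈ F, ¬ Q ⊆ P → ∃ x ∈ Q, x ∉ P ∧ insert x P ∈ F) : WellGraded F :=
  fun P hP Q hQ _ => exists_isTightPath_of_exists_insert hF P hP Q hQ

end TightPath

section Span

variable {G : Finset (Finset α)} {P S : Finset α}

theorem mem_span_iff : S ∈ Span G ↔ ∃ H ⊆ G, H.Nonempty ∧ H.sup id = S := by
  simp [Span, and_assoc]

theorem subset_span : G ⊆ Span G := fun S hS =>
  mem_span_iff.mpr ⟨{S}, singleton_subset_iff.mpr hS, singleton_nonempty S, sup_singleton⟩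

theorem union_mem_span (hP : P ∈ Span G) (hS : S ∈ Span G) : P ∪ S ∈ Span G := by
  obtain ⟨H₁, hH₁G, hH₁, rfl⟩ := mem_span_iff.mp hP
  obtain ⟨H₂, hH₂G, -, rfl⟩ := mem_span_iff.mp hS
  exact mem_span_iff.mpr ⟨H₁ ∪ H₂, union_subset hH₁G hH₂G, hH₁.mono subset_union_left, sup_union⟩

theorem exists_mem_subset_of_mem_span (hP : P ∈ Span G) : ∃ A ∈ G, A ⊆ P := by
  obtain ⟨H, hHG, ⟨A, hA⟩, rfl⟩ := mem_span_iff.mp hP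
  exact ⟨A, hHG hA, le_sup (f := id) hA⟩

theorem exists_mem_subset_of_mem_mem_span {x : α} (hP : P ∈ Span G) (hx : x ∈ P) :
    ∃ A ∈ G, x ∈ A ∧ A ⊆ P := by
  obtain ⟨H, hHG, -, rfl⟩ := mem_span_iff.mp hP
  obtain ⟨A, hA, hxA⟩ := mem_sup.mp hx
  exact ⟨A, hHG hA, hxA, le_sup (f := id) hA⟩

theorem exists_insert_mem_span_of_isTightPath {F : Finset (Finset α)} {a b A : Finset α}
    {p : List (Finset α)} (hP : P ∈ Span G) (hp : IsTightPath F a b p) (hpG : ∀ T ∈ p, T ∈ G)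
    (hab : a ⊆ b) (haP : a ⊆ P) (hA : A ∈ p) (hAP : ¬ A ⊆ P) :
    ∃ x ∈ A, x ∉ P ∧ insert x P ∈ Span G := by
  induction p generalizing a with
  | nil => simp at hA
  | cons c t ih =>
    obtain rfl : c = a := Option.some_inj.mp hp.1
    obtain rfl | hAt := List.mem_cons.mp hA
    · exact absurd haP hAP
    cases t with
    | nil => simp at hAt
    | cons d t =>
      obtain ⟨hcd, -, hd⟩ := hp.of_cons_cons
      have hdb : d ⊆ b := (hp.subset_and_subset_of_subset hab (by simp)).2
      by_cases hdP : d ⊆ P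
      · exact ih hd (fun T hT => hpG T (List.mem_cons_of_mem _ hT)) hdb hdP hAt
      obtain ⟨y, hyd, hyP⟩ := not_subset.mp hdP
      have hdA : d ⊆ A := (hd.subset_and_subset_of_subset hdb hAt).1
      refine ⟨y, hdA hyd, hyP, ?_⟩
      rw [← union_eq_insert_of_card_symmDiff_eq_one haP hcd hyd hyP]
      exact union_mem_span hP (subset_span (hpG d (by simp)))

end Span

/-- Any path extension is well-graded. -/
theorem path_extension_wellGraded (B : Finset (Finset α))
    (π : Finset α → Finset α → List (Finset α))
    (hπ : ∀ K ∈ B, ∀ L ∈ B, IsTightPath ((B.sup id).powerset) K (K ∪ L) (π K L))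
    (B' : Finset (Finset α))
    (hB' : ∀ S : Finset α, S ∈ B' ↔ ∃ K ∈ B, ∃ L ∈ B, S ∈ π K L) :
    WellGraded (Span B') := by
  have hπB' : ∀ K ∈ B, ∀ L ∈ B, ∀ S ∈ π K L, S ∈ B' := fun K hK L hL S hS =>
    (hB' S).mpr ⟨K, hK, L, hL, hS⟩
  have hπ_subset : ∀ K ∈ B, ∀ L ∈ B, ∀ S ∈ π K L, K ⊆ S ∧ S ⊆ K ∪ L := fun K hK L hL _ =>
    (hπ K hK L hL).subset_and_subset_of_subset subset_union_left
  refine WellGraded.of_exists_insert fun P hP Q hQ hQP => ?_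
  obtain ⟨x₀, hx₀Q, hx₀P⟩ := not_subset.mp hQP
  obtain ⟨A, hAB', hx₀A, hAQ⟩ := exists_mem_subset_of_mem_mem_span hQ hx₀Q
  obtain ⟨K, hK, L, hL, hAπ⟩ := (hB' A).mp hAB'
  by_cases hKP : K ⊆ P
  · obtain ⟨x, hxA, hxP, hx⟩ := exists_insert_mem_span_of_isTightPath hP (hπ K hK L hL)
      (hπB' K hK L hL) subset_union_left hKP hAπ fun hAP => hx₀P (hAP hx₀A)
    exact ⟨x, hAQ hxA, hxP, hx⟩
  obtain ⟨A', hA'B', hA'P⟩ := exists_mem_subset_of_mem_span hP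
  obtain ⟨K', hK', L', hL', hA'π⟩ := (hB' A').mp hA'B'
  have hK'P : K' ⊆ P := (hπ_subset K' hK' L' hL' A' hA'π).1.trans hA'P
  obtain ⟨x, hxK'K, hxP, hx⟩ := exists_insert_mem_span_of_isTightPath hP (hπ K' hK' K hK)
    (hπB' K' hK' K hK) subset_union_left hK'P (List.mem_of_getLast? (hπ K' hK' K hK).2.1)
    fun h => hKP (subset_union_right.trans h)
  have hxK : x ∈ K := (mem_union.mp hxK'K).resolve_left fun h => hxP (hK'P h)
  exact ⟨x, hAQ ((hπ_subset K hK L hL A hAπ).1 hxK), hxP, hx⟩
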